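/- For the complete bipartite graph K_{3,3}, there is an embedding of the 8-clique into K_{3,3} with weak edge depth 4; hence emb(K_{3,3}) ≥ 2. -/

import Mathlib

open Finset

structure FHypergraph (V : Type*) [DecidableEq V] [Fintype V] where
  edges : Finset (Finset V)

namespace FHypergraph

variable {V : Type*} [DecidableEq V] [Fintype V]

/-- Two vertex sets touch in `H`: they intersect, or some hyperedge meets both. -/
def touch (H : FHypergraph V) (S T : Finset V) : Prop :=
  (S ∩ T).Nonempty ∨ ∃ e ∈ H.edges, (e ∩ S).Nonempty ∧ (e ∩ T).Nonempty

/-- `S` induces a connected subhypergraph of `H`. -/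
def connSet (H : FHypergraph V) (S : Finset V) : Prop :=
  ∀ a ∈ S, ∀ b ∈ S,
    Relation.ReflTransGen (fun x y => x ∈ S ∧ y ∈ S ∧ ∃ e ∈ H.edges, x ∈ e ∧ y ∈ e) a b

/-- An embedding of the `k`-clique into the hypergraph `H`. -/
def IsCliqueEmb (H : FHypergraph V) (k : ℕ) (ψ : Fin k → Finset V) : Prop :=
  (∀ i, (ψ i).Nonempty) ∧ (∀ i, H.connSet (ψ i)) ∧
    ∀ i j : Fin k, i ≠ j → H.touch (ψ i) (ψ j)

/-- The weak edge depth of an embedding: the max over hyperedges `e` of the number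
of clique vertices whose image meets `e`. -/
def wedOf (H : FHypergraph V) {k : ℕ} (ψ : Fin k → Finset V) : ℕ :=
  H.edges.sup fun e => (Finset.univ.filter fun i : Fin k => ((ψ i) ∩ e).Nonempty).card

/-- `wed (C_k ↦ H)`: the minimum weak edge depth over embeddings of the `k`-clique. -/
noncomputable def wed (H : FHypergraph V) (k : ℕ) : ℕ :=
  sInf {w | ∃ ψ : Fin k → Finset V, H.IsCliqueEmb k ψ ∧ H.wedOf ψ ≤ w}

end FHypergraph

/-- A tree decomposition of a hypergraph. -/
structure IsTreeDecomp {V : Type*} [DecidableEq V] [Fintype V] {ι : Type*}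
    (H : FHypergraph V) (T : SimpleGraph ι) (χ : ι → Finset V) : Prop where
  tree : T.IsTree
  covers : ∀ e ∈ H.edges, ∃ t, e ⊆ χ t
  conn : ∀ v : V, (T.induce {t | v ∈ χ t}).Connected

/-- The clique embedding power of a hypergraph. -/
noncomputable def embPower {V : Type*} [DecidableEq V] [Fintype V] (H : FHypergraph V) : ℝ :=
  sSup {x : ℝ | ∃ k : ℕ, 3 ≤ k ∧ x = (k : ℝ) / (H.wed k : ℝ)}

/-- The complete bipartite graph `K_{3,3}` as a hypergraph: vertices
`Fin 3 ⊕ Fin 3`, hyperedges the edges `{x_i, y_j}`. -/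
def K33 : FHypergraph (Fin 3 ⊕ Fin 3) :=
  ⟨Finset.univ.image fun p : Fin 3 × Fin 3 =>
    ({Sum.inl p.1, Sum.inr p.2} : Finset (Fin 3 ⊕ Fin 3))⟩

/-!
Place the clique vertices `1, …, 6` on the six edges `{x_i, y_j}` with `i ≤ 2` and send `7, 8`
to `x_3`. Two such images always touch, since every `x` is adjacent to every `y`, and an edge
`{x_i, y_j}` meets exactly four images: the three through `x_i` and one more through `y_j` when
`i ≤ 2`, or `7, 8` and the two through `y_j` when `i = 3`.

For the bound on `emb`, double counting shows that in a hypergraph without isolated vertices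
every embedding of the `k`-clique has `k ≤ #edges * wedOf ψ`. So all ratios `k / wed k` are
at most `#edges`, the supremum is a genuine one, and `wed 8 ≥ 1`, giving `emb ≥ 8 / 4`.
-/

open Finset

namespace FHypergraph

variable {V : Type*} [DecidableEq V] [Fintype V] {H : FHypergraph V}

theorem connSet_of_subset_edge {S e : Finset V} (he : e ∈ H.edges) (hS : S ⊆ e) :
    H.connSet S :=
  fun _ ha _ hb => .single ⟨ha, hb, e, he, hS ha, hS hb⟩

theorem card_le_card_edges_mul_wedOf (hcover : ∀ v, ∃ e ∈ H.edges, v ∈ e) {k : ℕ}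
    {ψ : Fin k → Finset V} (hψ : ∀ i, (ψ i).Nonempty) : k ≤ #H.edges * H.wedOf ψ := by
  have hmeet : ∀ i, ∃ e ∈ H.edges, (ψ i ∩ e).Nonempty := fun i =>
    let ⟨v, hv⟩ := hψ i
    let ⟨e, he, hve⟩ := hcover v
    ⟨e, he, v, mem_inter.mpr ⟨hv, hve⟩⟩
  choose f hf hfψ using hmeet
  have hfiber : ∀ e ∈ H.edges, #{i ∈ univ | f i = e} ≤ H.wedOf ψ := fun e he =>
    (card_le_card fun i hi => by
      simp only [mem_filter] at hi ⊢
      exact ⟨hi.1, hi.2 ▸ hfψ i⟩).trans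
    (le_sup (f := fun e => #{i ∈ univ | (ψ i ∩ e).Nonempty}) he)
  simpa [mul_comm] using card_le_mul_card_image_of_maps_to (fun i _ => hf i) _ hfiber

theorem wed_le_wedOf {k : ℕ} {ψ : Fin k → Finset V} (hψ : H.IsCliqueEmb k ψ) :
    H.wed k ≤ H.wedOf ψ :=
  Nat.sInf_le ⟨ψ, hψ, le_rfl⟩

theorem exists_wedOf_le_wed {k : ℕ} (h : ∃ ψ, H.IsCliqueEmb k ψ) :
    ∃ ψ, H.IsCliqueEmb k ψ ∧ H.wedOf ψ ≤ H.wed k :=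
  let ⟨ψ, hψ⟩ := h
  Nat.sInf_mem (s := {w | ∃ ψ, H.IsCliqueEmb k ψ ∧ H.wedOf ψ ≤ w}) ⟨_, ψ, hψ, le_rfl⟩

theorem le_card_edges_mul_wed (hcover : ∀ v, ∃ e ∈ H.edges, v ∈ e) {k : ℕ}
    (h : ∃ ψ, H.IsCliqueEmb k ψ) : k ≤ #H.edges * H.wed k := by
  obtain ⟨ψ, hψ, hle⟩ := exists_wedOf_le_wed h
  exact (card_le_card_edges_mul_wedOf hcover hψ.1).trans (Nat.mul_le_mul_left _ hle)

/-- If `wed k = 0` then the quotient is `0` by the convention `x / 0 = 0`. -/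
theorem div_wed_le_card_edges (hcover : ∀ v, ∃ e ∈ H.edges, v ∈ e) (k : ℕ) :
    (k : ℝ) / H.wed k ≤ #H.edges := by
  rcases (H.wed k).eq_zero_or_pos with h0 | hpos
  · simp [h0]
  obtain ⟨-, ψ, hψ, -⟩ := Nat.nonempty_of_pos_sInf hpos
  rw [div_le_iff₀ (by exact_mod_cast hpos)]
  exact_mod_cast le_card_edges_mul_wed hcover ⟨ψ, hψ⟩

theorem div_le_embPower (hcover : ∀ v, ∃ e ∈ H.edges, v ∈ e) {k w : ℕ} (hk : 3 ≤ k)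
    {ψ : Fin k → Finset V} (hψ : H.IsCliqueEmb k ψ) (hw : H.wedOf ψ ≤ w) :
    (k : ℝ) / w ≤ embPower H := by
  have hbdd : BddAbove {x : ℝ | ∃ k : ℕ, 3 ≤ k ∧ x = (k : ℝ) / (H.wed k : ℝ)} :=
    ⟨#H.edges, by rintro _ ⟨k, -, rfl⟩; exact div_wed_le_card_edges hcover k⟩
  have hpos : (0 : ℝ) < H.wed k := by
    have := le_card_edges_mul_wed hcover ⟨ψ, hψ⟩
    exact_mod_cast Nat.pos_of_ne_zero fun h => by rw [h, mul_zero] at this; omega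
  calc (k : ℝ) / w ≤ k / H.wed k :=
        div_le_div_of_nonneg_left (Nat.cast_nonneg k) hpos
          (by exact_mod_cast (wed_le_wedOf hψ).trans hw)
    _ ≤ embPower H := le_csSup hbdd ⟨k, hk, rfl⟩

end FHypergraph

namespace K33

theorem pair_mem_edges (a b : Fin 3) :
    ({Sum.inl a, Sum.inr b} : Finset (Fin 3 ⊕ Fin 3)) ∈ K33.edges :=
  mem_image.mpr ⟨(a, b), mem_univ _, rfl⟩

theorem exists_mem_edges (v : Fin 3 ⊕ Fin 3) : ∃ e ∈ K33.edges, v ∈ e := by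
  rcases v with a | b
  · exact ⟨_, pair_mem_edges a 0, by simp⟩
  · exact ⟨_, pair_mem_edges 0 b, by simp⟩

def cliqueEmb8 : Fin 8 → Finset (Fin 3 ⊕ Fin 3) :=
  ![{Sum.inl 0, Sum.inr 0}, {Sum.inl 1, Sum.inr 0},
    {Sum.inl 0, Sum.inr 1}, {Sum.inl 1, Sum.inr 1},
    {Sum.inl 0, Sum.inr 2}, {Sum.inl 1, Sum.inr 2},
    {Sum.inl 2}, {Sum.inl 2}]

theorem isCliqueEmb_cliqueEmb8 : K33.IsCliqueEmb 8 cliqueEmb8 := by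
  refine ⟨by decide, fun i => ?_, by unfold FHypergraph.touch; decide⟩
  obtain ⟨e, he, hsub⟩ : ∃ e ∈ K33.edges, cliqueEmb8 i ⊆ e := by revert i; decide
  exact FHypergraph.connSet_of_subset_edge he hsub

theorem wedOf_cliqueEmb8 : K33.wedOf cliqueEmb8 = 4 := by decide

end K33

/-- There is an embedding of the `8`-clique into `K_{3,3}` with weak edge depth
`4`; hence `emb(K_{3,3}) ≥ 2`. -/
theorem K33_emb_lower_bound :
    (∃ ψ : Fin 8 → Finset (Fin 3 ⊕ Fin 3),
      K33.IsCliqueEmb 8 ψ ∧ K33.wedOf ψ ≤ 4) ∧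
    (2 : ℝ) ≤ embPower K33 := by
  have hwed : K33.wedOf K33.cliqueEmb8 ≤ 4 := K33.wedOf_cliqueEmb8.le
  refine ⟨⟨_, K33.isCliqueEmb_cliqueEmb8, hwed⟩, ?_⟩
  calc (2 : ℝ) = (8 : ℕ) / (4 : ℕ) := by norm_num
    _ ≤ embPower K33 :=
      FHypergraph.div_le_embPower K33.exists_mem_edges le_add_self K33.isCliqueEmb_cliqueEmb8 hwed
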